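/- arXiv:2106.10998 — 8 statements merged into one kernel-verified Lean document; each statement's English description precedes it below -/
import Mathlib

section
/- Let R = ℂ⟦X,Y⟧ be the formal power series ring in two variables over ℂ (MvPowerSeries (Fin 2) ℂ). Suppose P, P₁, P₂, f, g ∈ R and c₁, c₂ ∈ ℂ satisfy P = c₁·X·P₁ + c₂·Y·P₂. Then the ideals generated by {P₁ + f·P, P₂ + g·P} and by {P₁, P₂} coincide: Ideal.span {P₁ + f·P, P₂ + g·P} = Ideal.span {P₁, P₂}. -/
open MvPowerSeries

/-!
The new generators are the old ones multiplied by the matrix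
`[[1 + f a, f b], [g a, 1 + g b]]`, whose determinant `1 + a f + b g` has constant coefficient `1`
when `a = c₁ X` and `b = c₂ Y`; hence it is a unit and the matrix is invertible over `ℂ⟦X,Y⟧`.
-/

theorem Ideal.span_pair_add_mul_eq_of_isUnit {R : Type*} [CommRing R] {P₁ P₂ a b f g : R}
    (hu : IsUnit (1 + a * f + b * g)) :
    Ideal.span {P₁ + f * (a * P₁ + b * P₂), P₂ + g * (a * P₁ + b * P₂)} =
      Ideal.span {P₁, P₂} := by
  refine le_antisymm (Ideal.span_le.2 (Set.pair_subset ?_ ?_))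
    (Ideal.span_le.2 (Set.pair_subset ?_ ?_))
  · exact Ideal.mem_span_pair.2 ⟨1 + f * a, f * b, by ring⟩
  · exact Ideal.mem_span_pair.2 ⟨g * a, 1 + g * b, by ring⟩
  -- multiplying by the adjugate gives the determinant times `P₁`, resp. `P₂`
  · rw [SetLike.mem_coe, ← Ideal.unit_mul_mem_iff_mem _ hu]
    exact Ideal.mem_span_pair.2 ⟨1 + g * b, -(f * b), by ring⟩
  · rw [SetLike.mem_coe, ← Ideal.unit_mul_mem_iff_mem _ hu]
    exact Ideal.mem_span_pair.2 ⟨-(g * a), 1 + f * a, by ring⟩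

/-- The key algebraic step in the proof of Theorem 3.12: if
`P = c₁·X·P₁ + c₂·Y·P₂` in `ℂ⟦X,Y⟧`, then adding multiples of `P` to the
generators `P₁, P₂` does not change the ideal they generate. -/
theorem stmt3 (P P₁ P₂ f g : MvPowerSeries (Fin 2) ℂ) (c₁ c₂ : ℂ)
    (hP : P = (C (σ := Fin 2) (R := ℂ) c₁) * X 0 * P₁ + (C (σ := Fin 2) (R := ℂ) c₂) * X 1 * P₂) :
    Ideal.span {P₁ + f * P, P₂ + g * P} = Ideal.span {P₁, P₂} := by
  subst hP
  exact Ideal.span_pair_add_mul_eq_of_isUnit (isUnit_iff_constantCoeff.2 (by simp))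
end

section
/- Let R = ℂ⟦X,Y⟧ be the formal power series ring in two variables over ℂ and let k ≥ 1 be an integer. If l, n ∈ R both have zero constant coefficient and l·n = (X + Y^k)·(X − Y^k), then the quotient ℂ-vector space R / Ideal.span {l, n} has dimension k. -/
/-!
Both factors `X ± Yᵏ` are prime: the automorphism `X ↦ X ± Yᵏ` of `ℂ⟦X,Y⟧` (a substitution
with inverse `X ↦ X ∓ Yᵏ`) carries the prime `X` to them. As `l` and `n` are non-units, each of
them is then an associate of one of the two prime factors of `l·n`, so
`⟨l, n⟩ = ⟨X + Yᵏ, X − Yᵏ⟩ = ⟨X, Yᵏ⟩`, and the quotient by `⟨X, Yᵏ⟩` has basis `1, Y, …, Yᵏ⁻¹`.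
-/

open MvPowerSeries

theorem Ideal.span_pair_eq_of_associated {R : Type*} [CommSemiring R] [IsDomain R] {a b c d : R}
    (hac : Associated a c) (hbd : Associated b d) : Ideal.span {a, b} = Ideal.span {c, d} := by
  rw [Ideal.span_insert, Ideal.span_insert, Ideal.span_singleton_eq_span_singleton.2 hac,
    Ideal.span_singleton_eq_span_singleton.2 hbd]

theorem associated_of_mul_eq_mul_of_dvd {R : Type*} [CommRing R] [IsDomain R] {p q l n : R}
    (hp : p ≠ 0) (hq : Irreducible q) (hn : ¬IsUnit n) (h : l * n = p * q) (hpl : p ∣ l) :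
    Associated l p ∧ Associated n q := by
  obtain ⟨u, rfl⟩ := hpl
  have hq' : q = u * n := mul_left_cancel₀ hp (by rw [← h]; ring)
  have hu : IsUnit u := (hq.isUnit_or_isUnit hq').resolve_right hn
  exact ⟨(associated_mul_unit_right p u hu).symm, ⟨hu.unit, by rw [hq']; simp [mul_comm]⟩⟩

theorem Ideal.span_pair_eq_of_mul_eq_mul_of_prime {R : Type*} [CommRing R] [IsDomain R]
    {p q l n : R} (hp : Prime p) (hq : Prime q) (hl : ¬IsUnit l) (hn : ¬IsUnit n)
    (h : l * n = p * q) : Ideal.span {l, n} = Ideal.span {p, q} := by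
  rcases hp.dvd_or_dvd ⟨q, h⟩ with hpl | hpn
  · obtain ⟨hlp, hnq⟩ := associated_of_mul_eq_mul_of_dvd hp.ne_zero hq.irreducible hn h hpl
    exact Ideal.span_pair_eq_of_associated hlp hnq
  · obtain ⟨hnp, hlq⟩ :=
      associated_of_mul_eq_mul_of_dvd hp.ne_zero hq.irreducible hl (by rw [mul_comm, h]) hpn
    rw [Set.pair_comm]
    exact Ideal.span_pair_eq_of_associated hnp hlq

theorem Ideal.span_pair_add_sub {R : Type*} [CommRing R] (h2 : IsUnit (2 : R)) (a b : R) :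
    Ideal.span {a + b, a - b} = Ideal.span {a, b} := by
  obtain ⟨u, hu⟩ := h2.exists_left_inv
  apply le_antisymm <;> refine Ideal.span_le.2 (Set.pair_subset ?_ ?_) <;>
    refine Ideal.mem_span_pair.2 ?_
  exacts [⟨1, 1, by ring⟩, ⟨1, -1, by ring⟩, ⟨u, u, by linear_combination a * hu⟩,
    ⟨u, -u, by linear_combination b * hu⟩]

theorem Finsupp.eq_single_one_of_apply_zero {e : Fin 2 →₀ ℕ} (he : e 0 = 0) :
    e = Finsupp.single 1 (e 1) := by
  ext i
  fin_cases i <;> simp [he]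

namespace MvPowerSeries

section Shear

variable {σ R : Type*} [CommRing R] [DecidableEq σ]

noncomputable def shear (i j : σ) (c : R) (k : ℕ) : σ → MvPowerSeries σ R :=
  Function.update X i (X i + c • X j ^ k)

theorem shear_self (i j : σ) (c : R) (k : ℕ) : shear i j c k i = X i + c • X j ^ k :=
  Function.update_self ..

theorem shear_of_ne {i s : σ} (hs : s ≠ i) (j : σ) (c : R) (k : ℕ) : shear i j c k s = X s :=
  Function.update_of_ne hs ..

variable [Finite σ]

theorem hasSubst_shear (i j : σ) (c : R) {k : ℕ} (hk : k ≠ 0) : HasSubst (shear i j c k) := by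
  refine hasSubst_of_constantCoeff_zero fun s => ?_
  rcases eq_or_ne s i with rfl | hs
  · simp [shear_self, hk]
  · simp [shear_of_ne hs]

theorem subst_shear_neg_subst_shear {i j : σ} (hij : i ≠ j) (c : R) {k : ℕ} (hk : k ≠ 0)
    (f : MvPowerSeries σ R) :
    subst (shear i j (-c) k) (subst (shear i j c k) f) = f := by
  have hb := hasSubst_shear i j (-c) hk
  have hX : ∀ s, subst (shear i j (-c) k) (X s : MvPowerSeries σ R) = shear i j (-c) k s :=
    subst_X hb
  have hcomp : (fun s => subst (shear i j (-c) k) (shear i j c k s)) = X := by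
    funext s
    rcases eq_or_ne s i with rfl | hs
    · rw [shear_self, subst_add hb, subst_smul hb, subst_pow hb, hX, hX, shear_self,
        shear_of_ne hij.symm]
      module
    · rw [shear_of_ne hs, hX, shear_of_ne hs]
  rw [subst_comp_subst_apply (hasSubst_shear i j c hk) hb, hcomp, subst_self, id]

noncomputable def shearEquiv {i j : σ} (hij : i ≠ j) (c : R) {k : ℕ} (hk : k ≠ 0) :
    MvPowerSeries σ R ≃ₐ[R] MvPowerSeries σ R :=
  AlgEquiv.ofAlgHom (substAlgHom (hasSubst_shear i j c hk))
    (substAlgHom (hasSubst_shear i j (-c) hk))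
    (by ext1 f; simpa [coe_substAlgHom] using subst_shear_neg_subst_shear hij (-c) hk f)
    (by ext1 f; simpa [coe_substAlgHom] using subst_shear_neg_subst_shear hij c hk f)

theorem shearEquiv_X {i j : σ} (hij : i ≠ j) (c : R) {k : ℕ} (hk : k ≠ 0) :
    shearEquiv hij c hk (X i) = X i + c • X j ^ k := by
  rw [shearEquiv, AlgEquiv.ofAlgHom_apply, substAlgHom_X, shear_self]

end Shear

section Prime

variable {R : Type*} [CommRing R] [IsDomain R]

instance {σ : Type*} : IsDomain (MvPowerSeries σ R) := NoZeroDivisors.to_isDomain _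

theorem prime_X_zero (n : ℕ) : Prime (X 0 : MvPowerSeries (Fin (n + 1)) R) := by
  rw [← MulEquiv.prime_iff (finSuccEquiv R n), finSuccEquiv_X_zero]
  exact PowerSeries.X_prime

theorem prime_X_zero_add_smul_X_pow {n : ℕ} (c : R) {j : Fin (n + 1)} (hj : j ≠ 0) {k : ℕ}
    (hk : k ≠ 0) : Prime (X 0 + c • X j ^ k : MvPowerSeries (Fin (n + 1)) R) := by
  rw [← shearEquiv_X hj.symm c hk, MulEquiv.prime_iff]
  exact prime_X_zero n

end Prime

section Quotient

variable (R : Type*) [CommRing R]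

noncomputable def lowCoeffs (k : ℕ) : MvPowerSeries (Fin 2) R →ₗ[R] (Fin k → R) :=
  LinearMap.pi fun j => coeff (Finsupp.single 1 (j : ℕ))

variable {R}

theorem lowCoeffs_apply (k : ℕ) (f : MvPowerSeries (Fin 2) R) (j : Fin k) :
    lowCoeffs R k f j = coeff (Finsupp.single 1 (j : ℕ)) f := rfl

theorem lowCoeffs_surjective (k : ℕ) : Function.Surjective (lowCoeffs R k) := by
  classical
  intro v
  refine ⟨∑ j : Fin k, monomial (Finsupp.single 1 (j : ℕ)) (v j), funext fun j => ?_⟩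
  rw [lowCoeffs_apply, map_sum, Finset.sum_eq_single j (fun j' _ hj' => ?_) (by simp),
    coeff_monomial_same]
  rw [coeff_monomial_ne]
  rwa [Ne, (Finsupp.single_injective _).eq_iff, Fin.val_inj, eq_comm]

theorem ker_lowCoeffs (k : ℕ) :
    LinearMap.ker (lowCoeffs R k) =
      (Ideal.span {(X 0 : MvPowerSeries (Fin 2) R), X 1 ^ k}).restrictScalars R := by
  ext f
  rw [LinearMap.mem_ker, Submodule.restrictScalars_mem, Ideal.mem_span_pair]
  constructor
  · intro hf
    set g : MvPowerSeries (Fin 2) R := fun e => if e 0 = 0 then 0 else coeff e f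
    set h : MvPowerSeries (Fin 2) R := fun e => if e 0 = 0 then coeff e f else 0
    obtain ⟨A, hA⟩ : X 0 ∣ g := X_dvd_iff.2 fun e he => if_pos he
    obtain ⟨B, hB⟩ : X 1 ^ k ∣ h := X_pow_dvd_iff.2 fun e he => by
      change (if e 0 = 0 then coeff e f else 0) = 0
      split_ifs with h0
      · rw [Finsupp.eq_single_one_of_apply_zero h0]
        exact congrFun hf ⟨e 1, he⟩
      · rfl
    refine ⟨A, B, ?_⟩
    rw [mul_comm A, mul_comm B, ← hA, ← hB]
    ext e
    change (if e 0 = 0 then 0 else coeff e f) + (if e 0 = 0 then coeff e f else 0) = coeff e f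
    split_ifs <;> simp
  · rintro ⟨A, B, rfl⟩
    funext j
    rw [lowCoeffs_apply, map_add, mul_comm A, mul_comm B,
      X_dvd_iff.1 (dvd_mul_right _ _) _ (by simp),
      X_pow_dvd_iff.1 (dvd_mul_right _ _) _ (by simp), add_zero]
    rfl

theorem finrank_quotient_span_X_zero_X_one_pow [Nontrivial R] (k : ℕ) :
    Module.finrank R
      (MvPowerSeries (Fin 2) R ⧸ Ideal.span {(X 0 : MvPowerSeries (Fin 2) R), X 1 ^ k}) = k := by
  rw [← (Submodule.Quotient.restrictScalarsEquiv R _).finrank_eq, ← ker_lowCoeffs,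
    ((lowCoeffs R k).quotKerEquivOfSurjective (lowCoeffs_surjective k)).finrank_eq,
    Module.finrank_fin_fun]

end Quotient

end MvPowerSeries

/-- Theorem 3.14(2), case `A⁻_{2k−1}`: if `l·n = (X + Yᵏ)·(X − Yᵏ)` in `ℂ⟦X,Y⟧`
with `l, n` vanishing at the origin, then `dim_ℂ ℂ⟦X,Y⟧/⟨l,n⟩ = k`. -/
theorem stmt4 (k : ℕ) (hk : 1 ≤ k)
    (l n : MvPowerSeries (Fin 2) ℂ)
    (hl : constantCoeff l = 0)
    (hn : constantCoeff n = 0)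
    (hln : l * n = (X 0 + (X 1) ^ k) * (X 0 - (X 1) ^ k)) :
    Module.finrank ℂ (MvPowerSeries (Fin 2) ℂ ⧸ Ideal.span {l, n}) = k := by
  have hk0 : k ≠ 0 := Nat.one_le_iff_ne_zero.1 hk
  have hprime (c : ℂ) : Prime (X 0 + c • X 1 ^ k : MvPowerSeries (Fin 2) ℂ) :=
    prime_X_zero_add_smul_X_pow c one_ne_zero hk0
  have hplus : Prime (X 0 + X 1 ^ k : MvPowerSeries (Fin 2) ℂ) := by
    simpa using hprime 1
  have hminus : Prime (X 0 - X 1 ^ k : MvPowerSeries (Fin 2) ℂ) := by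
    simpa [sub_eq_add_neg] using hprime (-1)
  have hnonunit {f : MvPowerSeries (Fin 2) ℂ} (hf : constantCoeff f = 0) : ¬IsUnit f := by
    rw [isUnit_iff_constantCoeff, hf]
    exact not_isUnit_zero
  rw [Ideal.span_pair_eq_of_mul_eq_mul_of_prime hplus hminus (hnonunit hl) (hnonunit hn) hln,
    Ideal.span_pair_add_sub (by rw [isUnit_iff_constantCoeff, map_ofNat]; norm_num), finrank_quotient_span_X_zero_X_one_pow]
end

section
/- Let R = ℂ⟦X,Y⟧ be the formal power series ring in two variables over ℂ, let k ≥ 2 be an integer and ε ∈ {1, −1}. If l, n ∈ R both have zero constant coefficient and l·n = Y·(X² + ε·Y^{2k−1}), then the quotient ℂ-vector space R / Ideal.span {l, n} has dimension 2. -/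
/-!
Since `Y` is prime and divides `l * n`, we may assume `l = Y * a`, so that
`a * n = X² + ε Y^m` with `m = 2k - 1` odd. This series is irreducible: in a factorization into
non-units, restricting to the `Y`-axis gives `ord a(0,Y) + ord n(0,Y) = m`, while restricting
`∂_X` of the factorization gives `a(0,Y) ∂_X n(0,Y) = -n(0,Y) ∂_X a(0,Y)`; the `X²`-coefficient
shows that `∂_X a` and `∂_X n` do not vanish at the origin, so the two orders agree,
contradicting the parity of `m`. Hence `a` is a unit, `⟨l, n⟩ = ⟨Y, X² + ε Y^m⟩ = ⟨Y, X²⟩`, and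
`ℂ⟦X,Y⟧/⟨Y, X²⟩ ≅ ℂ⟦X⟧/⟨X²⟩` has basis `1, X`.
-/

open MvPowerSeries

namespace MvPowerSeries

section CommSemiring

variable {σ τ R : Type*} [CommSemiring R]

theorem ker_killCompl {e : τ ↪ σ} {i : σ} (he : ∀ j, j ∈ Set.range e ↔ j ≠ i) :
    RingHom.ker (killCompl (R := R) e) = Ideal.span {X i} := by
  ext f
  rw [RingHom.mem_ker, Ideal.mem_span_singleton, X_dvd_iff]
  constructor
  · intro hf d hd
    obtain ⟨x, rfl⟩ : d ∈ Set.range (Finsupp.embDomain e) := by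
      rw [Finsupp.mem_range_embDomain_iff]
      intro j hj
      exact (he j).2 fun hji => Finsupp.mem_support_iff.1 hj (hji ▸ hd)
    rw [← coeff_killCompl, hf, map_zero]
  · intro hf
    ext x
    rw [coeff_killCompl, hf _ (Finsupp.embDomain_of_notMem_range _ _ _ fun h => (he i).1 h rfl),
      map_zero]

theorem X_ne_zero [Nontrivial R] (i : σ) : (X i : MvPowerSeries σ R) ≠ 0 := by
  classical
  intro h
  simpa [coeff_X] using congrArg (coeff (Finsupp.single i 1)) h

noncomputable abbrev restrictAxis (i : σ) : MvPowerSeries σ R →ₐ[R] PowerSeries R :=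
  killCompl (Function.Embedding.punit i)

theorem coeff_restrictAxis (i : σ) (f : MvPowerSeries σ R) (n : ℕ) :
    PowerSeries.coeff n (restrictAxis i f) = coeff (Finsupp.single i n) f := by
  rw [PowerSeries.coeff_def Finsupp.single_eq_same, coeff_killCompl, Finsupp.embDomain_single]
  rfl

theorem constantCoeff_restrictAxis (i : σ) (f : MvPowerSeries σ R) :
    PowerSeries.constantCoeff (restrictAxis i f) = constantCoeff f := by
  rw [← PowerSeries.coeff_zero_eq_constantCoeff_apply, coeff_restrictAxis, Finsupp.single_zero,
    coeff_zero_eq_constantCoeff_apply]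

theorem restrictAxis_X_self (i : σ) : restrictAxis (R := R) i (X i) = PowerSeries.X :=
  killCompl_X (e := Function.Embedding.punit i) ()

theorem restrictAxis_X_of_ne {i j : σ} (h : j ≠ i) : restrictAxis (R := R) i (X j) = 0 :=
  killCompl_X_eq_zero fun ⟨_, hx⟩ => h hx.symm

theorem restrictAxis_surjective (i : σ) : Function.Surjective (restrictAxis (R := R) i) :=
  fun p => ⟨rename _ p, killCompl_rename_app p⟩

theorem constantCoeff_pderiv (i : σ) (f : MvPowerSeries σ R) :
    constantCoeff (pderiv R i f) = coeff (Finsupp.single i 1) f := by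
  rw [← coeff_zero_eq_constantCoeff_apply, coeff_pderiv]
  simp

theorem order_restrictAxis_pderiv_eq_zero_iff (i j : σ) (f : MvPowerSeries σ R) :
    (restrictAxis j (pderiv R i f)).order = 0 ↔ coeff (Finsupp.single i 1) f ≠ 0 := by
  rw [← not_iff_not, not_not, ← Ne, PowerSeries.order_ne_zero_iff_constCoeff_eq_zero,
    constantCoeff_restrictAxis, constantCoeff_pderiv]

end CommSemiring

section IsDomain

variable {σ R : Type*} [CommRing R] [IsDomain R]

instance : IsDomain (MvPowerSeries σ R) := NoZeroDivisors.to_isDomain _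

theorem X_prime (i : σ) : Prime (X i : MvPowerSeries σ R) := by
  rw [← Ideal.span_singleton_prime (X_ne_zero i),
    ← ker_killCompl (e := Function.Embedding.subtype (· ≠ i)) (by simp)]
  exact RingHom.ker_isPrime _

theorem constantCoeff_ne_zero_of_mul_eq_X_sq_add_C_mul_X_pow {ε : R} (hε : ε ≠ 0) {m : ℕ}
    (hm : Odd m) {a b : MvPowerSeries (Fin 2) R} (hab : a * b = X 0 ^ 2 + C ε * X 1 ^ m)
    (ha : constantCoeff a = 0) : constantCoeff b ≠ 0 := by
  intro hb
  have hlin : coeff (Finsupp.single 0 1) a * coeff (Finsupp.single 0 1) b = 1 := by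
    simpa [PowerSeries.coeff_mul, Finset.Nat.antidiagonal_succ, restrictAxis_X_self,
      restrictAxis_X_of_ne, killCompl_C, constantCoeff_restrictAxis, ha, hb, zero_pow hm.pos.ne',
      coeff_restrictAxis] using congrArg (PowerSeries.coeff 2 ∘ restrictAxis 0) hab
  have hY : restrictAxis 1 a * restrictAxis 1 b = PowerSeries.C ε * PowerSeries.X ^ m := by
    rw [← map_mul, hab, map_add, map_mul, map_pow, map_pow, restrictAxis_X_self,
      restrictAxis_X_of_ne zero_ne_one, zero_pow two_ne_zero, zero_add, killCompl_C]
    rfl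
  have hder : restrictAxis 1 a * restrictAxis 1 (pderiv R 0 b) +
      restrictAxis 1 b * restrictAxis 1 (pderiv R 0 a) = 0 := by
    simpa [Derivation.leibniz, Derivation.leibniz_pow, pderiv_X_of_ne, restrictAxis_X_of_ne]
      using congrArg (restrictAxis 1 ∘ pderiv R 0) hab
  have hsym : (restrictAxis 1 a).order = (restrictAxis 1 b).order := by
    simpa [PowerSeries.order_mul, PowerSeries.order_neg,
      (order_restrictAxis_pderiv_eq_zero_iff 0 1 a).2 (left_ne_zero_of_mul_eq_one hlin),
      (order_restrictAxis_pderiv_eq_zero_iff 0 1 b).2 (right_ne_zero_of_mul_eq_one hlin)]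
      using congrArg PowerSeries.order (eq_neg_of_add_eq_zero_left hder)
  have hsum : (restrictAxis 1 a).order + (restrictAxis 1 b).order = m := by
    rw [← PowerSeries.order_mul, hY, ← PowerSeries.monomial_eq_C_mul_X_pow,
      PowerSeries.order_monomial_of_ne_zero _ _ hε]
  obtain ⟨r, hr⟩ : ∃ r : ℕ, r = (restrictAxis 1 b).order :=
    ENat.ne_top_iff_exists.1 fun h => by simp [h] at hsum
  rw [hsym, ← hr] at hsum
  obtain ⟨k, rfl⟩ := hm
  norm_cast at hsum
  omega

end IsDomain

section Field

variable {K : Type*} [Field K]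

theorem irreducible_X_sq_add_C_mul_X_pow {ε : K} (hε : ε ≠ 0) {m : ℕ} (hm : Odd m) :
    Irreducible (X 0 ^ 2 + C ε * X 1 ^ m : MvPowerSeries (Fin 2) K) := by
  refine ⟨fun h => ?_, fun a b hab => ?_⟩
  · simp [isUnit_iff_constantCoeff, zero_pow hm.pos.ne'] at h
  · simp only [isUnit_iff_constantCoeff, isUnit_iff_ne_zero]
    by_contra! h
    exact constantCoeff_ne_zero_of_mul_eq_X_sq_add_C_mul_X_pow hε hm hab.symm h.1 h.2

theorem span_pair_eq_span_X_one_X_zero_sq_of_X_one_dvd {ε : K} (hε : ε ≠ 0) {m : ℕ}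
    (hm : Odd m) {l n : MvPowerSeries (Fin 2) K} (hn : constantCoeff n = 0)
    (hln : l * n = X 1 * (X 0 ^ 2 + C ε * X 1 ^ m)) (hdvd : X 1 ∣ l) :
    Ideal.span {l, n} = Ideal.span {X 1, X 0 ^ 2} := by
  obtain ⟨a, rfl⟩ := hdvd
  have han : a * n = X 0 ^ 2 + C ε * X 1 ^ m :=
    mul_left_cancel₀ (X_ne_zero 1) (by rw [← mul_assoc, hln])
  have ha : IsUnit a :=
    ((irreducible_X_sq_add_C_mul_X_pow hε hm).isUnit_or_isUnit han.symm).resolve_right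
      (by rw [isUnit_iff_constantCoeff, hn]; exact not_isUnit_zero)
  obtain ⟨k, rfl⟩ := hm
  calc Ideal.span {X 1 * a, n} = Ideal.span {X 0 ^ 2 + C ε * X 1 ^ (2 * k) * X 1, X 1} := by
        rw [Ideal.span_pair_comm, Ideal.span_insert, Ideal.span_singleton_mul_right_unit ha,
          Ideal.span_insert, Ideal.span_singleton_eq_span_singleton.2
            ⟨ha.unit, by rw [ha.unit_spec, mul_comm, han]⟩, mul_assoc, ← pow_succ]
    _ = Ideal.span {X 1, X 0 ^ 2} := by rw [Ideal.span_pair_add_mul_right, Ideal.span_pair_comm]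

theorem span_pair_eq_span_X_one_X_zero_sq {ε : K} (hε : ε ≠ 0) {m : ℕ} (hm : Odd m)
    {l n : MvPowerSeries (Fin 2) K} (hl : constantCoeff l = 0) (hn : constantCoeff n = 0)
    (hln : l * n = X 1 * (X 0 ^ 2 + C ε * X 1 ^ m)) :
    Ideal.span {l, n} = Ideal.span {X 1, X 0 ^ 2} := by
  rcases (X_prime 1).dvd_or_dvd ⟨_, hln⟩ with hdvd | hdvd
  · exact span_pair_eq_span_X_one_X_zero_sq_of_X_one_dvd hε hm hn hln hdvd
  · rw [Ideal.span_pair_comm]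
    exact span_pair_eq_span_X_one_X_zero_sq_of_X_one_dvd hε hm hl (by rwa [mul_comm]) hdvd

theorem span_X_one_X_zero_pow_eq_comap_restrictAxis (n : ℕ) :
    (Ideal.span {X 1, X 0 ^ n} : Ideal (MvPowerSeries (Fin 2) K)) =
      Ideal.comap (restrictAxis (0 : Fin 2)) (Ideal.span {PowerSeries.X ^ n}) := by
  have hker : RingHom.ker (restrictAxis (R := K) (0 : Fin 2)) = Ideal.span {X 1} :=
    ker_killCompl fun j => by fin_cases j <;> simp [Function.Embedding.punit]
  have hmap : Ideal.map (restrictAxis (0 : Fin 2)) (Ideal.span {X 0 ^ n}) =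
      Ideal.span {(PowerSeries.X : PowerSeries K) ^ n} := by
    rw [Ideal.map_span, Set.image_singleton, map_pow, restrictAxis_X_self]
  rw [← hmap, Ideal.comap_map_of_surjective _ (restrictAxis_surjective 0),
    ← RingHom.ker_eq_comap_bot, hker, ← Ideal.span_insert, Ideal.span_pair_comm]

theorem finrank_quotient_span_X_one_X_zero_pow (n : ℕ) :
    Module.finrank K
      (MvPowerSeries (Fin 2) K ⧸ (Ideal.span {X 1, X 0 ^ n} : Ideal (MvPowerSeries (Fin 2) K))) =
      n := by
  let L := (LinearMap.pi fun i : Fin n => PowerSeries.coeff (R := K) i) ∘ₗ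
    (restrictAxis (0 : Fin 2)).toLinearMap
  have hker : LinearMap.ker L = (Ideal.span {X 1, X 0 ^ n}).restrictScalars K := by
    ext f
    simp [L, span_X_one_X_zero_pow_eq_comap_restrictAxis, Ideal.mem_span_singleton,
      PowerSeries.X_pow_dvd_iff, funext_iff, Fin.forall_iff]
  have hsurj : Function.Surjective L := fun v => by
    refine ⟨rename (Function.Embedding.punit 0)
      (PowerSeries.mk fun i => if h : i < n then v ⟨i, h⟩ else 0), ?_⟩
    ext i
    simp [L, killCompl_rename_app]
  rw [← (Submodule.Quotient.restrictScalarsEquiv K _).finrank_eq, ← hker,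
    (L.quotKerEquivOfSurjective hsurj).finrank_eq, Module.finrank_fin_fun]

end Field

end MvPowerSeries

/-- Theorem 3.14(2), case `D_{2k+1}`: if `l·n = Y·(X² + ε·Y^{2k−1})` in `ℂ⟦X,Y⟧`
with `l, n` vanishing at the origin, then `dim_ℂ ℂ⟦X,Y⟧/⟨l,n⟩ = 2`. -/
theorem stmt5 (k : ℕ) (hk : 2 ≤ k) (ε : ℂ) (hε : ε = 1 ∨ ε = -1)
    (l n : MvPowerSeries (Fin 2) ℂ)
    (hl : constantCoeff l = 0)
    (hn : constantCoeff n = 0)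
    (hln : l * n = X 1 * ((X 0) ^ 2 + (C ε : MvPowerSeries (Fin 2) ℂ) * (X 1) ^ (2 * k - 1))) :
    Module.finrank ℂ (MvPowerSeries (Fin 2) ℂ ⧸ Ideal.span {l, n}) = 2 := by
  have hε0 : ε ≠ 0 := by rcases hε with rfl | rfl <;> norm_num
  have hodd : Odd (2 * k - 1) := ⟨k - 1, by omega⟩
  rw [span_pair_eq_span_X_one_X_zero_sq hε0 hodd hl hn hln, finrank_quotient_span_X_one_X_zero_pow]
end

section
/- Let R₀ = ℝ⟦X,Y⟧ be the formal power series ring in two variables over ℝ and let k ≥ 2 be an integer. Suppose l, n ∈ R₀ both have zero constant coefficient and l·n = Y·(X² + Y^{2k−2}). Let l̂, n̂ denote their images in R = ℂ⟦X,Y⟧ under the coefficient-wise inclusion ℝ → ℂ. Then the quotient ℂ-vector space R / Ideal.span {l̂, n̂} has dimension 2. -/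
/-!
Since `Y` is prime in `ℝ⟦X,Y⟧` and divides `l·n`, we may assume `l = Y·w`, so that
`w·n = X² + Y^m` with `m = 2k - 2 > 0`. Over `ℝ` this forces `w` to be a unit: viewing both
series as power series in `X` over `ℝ⟦Y⟧`, the coefficients of `X⁰, X¹, X²` give
`w₀n₀ = Y^m`, `w₀n₁ + w₁n₀ = 0` and `w₁(0)n₁(0) = 1`, and comparing orders and leading
coefficients in `Y` then produces a square root of `-1`. Hence `⟨l̂, n̂⟩ = ⟨Y, X²⟩`, and
`f ↦ f(0) + (∂f/∂X)(0)·ε` identifies `ℂ⟦X,Y⟧/⟨Y, X²⟩` with the dual numbers over `ℂ`.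
-/

open MvPowerSeries

theorem Ideal.span_mul_unit_pair_eq_of_mul_eq_sq_add_pow {S : Type*} [CommRing S]
    {x y w n : S} {m : ℕ} (hm : m ≠ 0) (hw : IsUnit w) (h : w * n = x ^ 2 + y ^ m) :
    Ideal.span {y * w, n} = Ideal.span {y, x ^ 2} := by
  obtain ⟨k, rfl⟩ := Nat.exists_eq_succ_of_ne_zero hm
  obtain ⟨u, rfl⟩ := hw
  have hn : n = ↑u⁻¹ * (x ^ 2 + y * y ^ k) := by
    rw [← pow_succ', ← h, Units.inv_mul_cancel_left]
  rw [Ideal.span_insert, span_singleton_mul_right_unit u.isUnit, hn,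
    span_singleton_mul_left_unit u⁻¹.isUnit, ← Ideal.span_insert, span_pair_add_left_mul]

namespace PowerSeries

theorem isSquare_neg_one_of_mul_eq_X_pow {K : Type*} [Field K] {m : ℕ} {u₀ u₁ v₀ v₁ : K⟦X⟧}
    (h₀ : u₀ * v₀ = X ^ m) (h₁ : u₀ * v₁ + u₁ * v₀ = 0)
    (h₂ : constantCoeff u₁ * constantCoeff v₁ = 1) : IsSquare (-1 : K) := by
  have order_eq_zero {w : K⟦X⟧} (hw : constantCoeff w ≠ 0) : w.order = 0 :=
    not_not.1 fun h => hw (order_ne_zero_iff_constCoeff_eq_zero.1 h)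
  have hu₁ := order_eq_zero (left_ne_zero_of_mul_eq_one h₂)
  have hv₁ := order_eq_zero (right_ne_zero_of_mul_eq_one h₂)
  have horder : u₀.order = v₀.order := calc
    u₀.order = (u₀ * v₁).order := by rw [order_mul, hv₁, add_zero]
    _ = (-(u₁ * v₀)).order := by rw [eq_neg_of_add_eq_zero_left h₁]
    _ = v₀.order := by rw [order_neg, order_mul, hu₁, zero_add]
  set a := divXPowOrder u₀
  set b := divXPowOrder v₀
  have hab : a * b = 1 := by
    rw [← divXPowOrder_mul, h₀, divXPowOrder_pow, divXPowOrder_X, one_pow]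
  have hu₀ : u₀ = X ^ v₀.order.toNat * a := by rw [← horder, X_pow_order_mul_divXPowOrder]
  have hv₀ : v₀ = X ^ v₀.order.toNat * b := X_pow_order_mul_divXPowOrder.symm
  have hlead : a * v₁ + u₁ * b = 0 := by
    have : X ^ v₀.order.toNat * (a * v₁ + u₁ * b) = 0 := by
      linear_combination h₁ - v₁ * hu₀ - u₁ * hv₀
    exact (mul_eq_zero.1 this).resolve_left (pow_ne_zero _ X_ne_zero)
  have hab₀ := congrArg constantCoeff hab
  have hlead₀ := congrArg constantCoeff hlead
  simp only [map_mul, map_add, map_one, map_zero] at hab₀ hlead₀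
  -- with `α = a(0)`, `β = b(0)`, `p = u₁(0)`, `r = v₁(0)`: `(αr)² = -(αr)(pβ) = -(pr)(αβ) = -1`
  exact ⟨constantCoeff a * constantCoeff v₁, by
    linear_combination (-(constantCoeff a * constantCoeff v₁)) * hlead₀
      + (constantCoeff u₁ * constantCoeff v₁) * hab₀ + h₂⟩

theorem mul_ne_X_sq_add_C_X_pow {K : Type*} [Field K] (hK : ¬IsSquare (-1 : K)) (m : ℕ)
    {u v : K⟦X⟧⟦X⟧} (hu : constantCoeff (constantCoeff u) = 0)
    (hv : constantCoeff (constantCoeff v) = 0) : u * v ≠ X ^ 2 + C (X ^ m) := by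
  intro h
  have hcoeff (i : ℕ) : coeff i (u * v) = coeff i (X ^ 2 + C (X ^ m)) := by rw [h]
  refine hK (isSquare_neg_one_of_mul_eq_X_pow (u₀ := coeff 0 u) (u₁ := coeff 1 u)
    (v₀ := coeff 0 v) (v₁ := coeff 1 v) (m := m) ?_ ?_ ?_)
  · simpa [coeff_mul] using hcoeff 0
  · simpa [coeff_mul, Finset.Nat.sum_antidiagonal_succ, -map_pow] using hcoeff 1
  · simpa [coeff_mul, Finset.Nat.sum_antidiagonal_succ, hu, hv, -map_pow] using
      congrArg constantCoeff (hcoeff 2)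

end PowerSeries

def finTwoEquivOptionUnit : Fin 2 ≃ Option Unit where
  toFun := ![none, some ()]
  invFun o := o.elim 0 fun _ => 1
  left_inv i := by fin_cases i <;> rfl
  right_inv o := by rcases o with _ | _ <;> rfl

namespace MvPowerSeries

section CommSemiring

variable {σ R : Type*} [CommSemiring R]

theorem coeff_single_mul (i : σ) (f g : MvPowerSeries σ R) :
    coeff (Finsupp.single i 1) (f * g) =
      constantCoeff f * coeff (Finsupp.single i 1) g +
        coeff (Finsupp.single i 1) f * constantCoeff g := by
  classical
  rw [coeff_mul, Finsupp.antidiagonal_single, Finset.sum_map]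
  simp [Finset.Nat.antidiagonal_succ]

noncomputable def toDualNumber (i : σ) : MvPowerSeries σ R →ₐ[R] DualNumber R :=
  AlgHom.ofLinearMap
    { toFun f := .inl (constantCoeff f) + .inr (coeff (Finsupp.single i 1) f)
      map_add' f g := by ext <;> simp
      map_smul' a f := by ext <;> simp }
    (by classical ext <;> simp [coeff_one])
    (fun f g => by ext <;> simp [coeff_single_mul])

@[simp] theorem fst_toDualNumber (i : σ) (f : MvPowerSeries σ R) :
    (toDualNumber i f).fst = constantCoeff f := by
  simp [toDualNumber]

@[simp] theorem snd_toDualNumber (i : σ) (f : MvPowerSeries σ R) :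
    (toDualNumber i f).snd = coeff (Finsupp.single i 1) f := by
  simp [toDualNumber]

theorem toDualNumber_surjective (i : σ) : Function.Surjective (toDualNumber (R := R) i) :=
  fun z => ⟨C z.fst + z.snd • X i, by classical ext <;> simp [coeff_X, coeff_C]⟩

variable (R) in
noncomputable def finTwoEquiv : MvPowerSeries (Fin 2) R ≃ₐ[R] PowerSeries (PowerSeries R) :=
  (renameEquiv R finTwoEquivOptionUnit).trans (optionEquivLeft Unit R)

@[simp] theorem finTwoEquiv_X_zero : finTwoEquiv R (X 0) = PowerSeries.X := by
  simp [finTwoEquiv, finTwoEquivOptionUnit]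

@[simp] theorem finTwoEquiv_X_one : finTwoEquiv R (X 1) = PowerSeries.C PowerSeries.X := by
  change optionEquivLeft Unit R (rename finTwoEquivOptionUnit (X 1)) = _
  rw [rename_X]
  exact optionEquivLeft_X_some ()

@[simp] theorem constantCoeff_constantCoeff_finTwoEquiv (f : MvPowerSeries (Fin 2) R) :
    PowerSeries.constantCoeff (PowerSeries.constantCoeff (finTwoEquiv R f)) =
      constantCoeff f := by
  have := coeff_coeff_optionEquivLeft (rename finTwoEquivOptionUnit f) 0 0
  rw [Finsupp.optionElim_zero, coeff_zero_eq_constantCoeff_apply,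
    PowerSeries.coeff_zero_eq_constantCoeff_apply, Finsupp.single_zero,
    coeff_zero_eq_constantCoeff_apply, constantCoeff_rename] at this
  exact this

end CommSemiring

section CommRing

variable {σ R : Type*} [CommRing R]

theorem prime_X [IsDomain R] (i : σ) : Prime (X i : MvPowerSeries σ R) := by
  classical
  have := NoZeroDivisors.to_isDomain (MvPowerSeries {j // j ≠ i} R)
  let e := (renameEquiv R (Equiv.optionSubtypeNe i)).symm.trans
    (optionEquivLeft {j // j ≠ i} R)
  have he : e (X i) = PowerSeries.X := by simp [e, renameEquiv_symm]
  rw [← MulEquiv.prime_iff e.toMulEquiv]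
  exact he ▸ PowerSeries.X_prime

theorem exists_eq_X_zero_mul_add_X_one_mul {f : MvPowerSeries (Fin 2) R}
    (hf : constantCoeff f = 0) : ∃ a b, f = X 0 * a + X 1 * b := by
  set F := finTwoEquiv R
  obtain ⟨q, hq⟩ : PowerSeries.X ∣ F f - PowerSeries.C (PowerSeries.constantCoeff (F f)) :=
    PowerSeries.X_dvd_iff.2 (by simp)
  obtain ⟨r, hr⟩ : PowerSeries.X ∣ PowerSeries.constantCoeff (F f) :=
    PowerSeries.X_dvd_iff.2 (by simpa [F] using hf)
  refine ⟨F.symm q, F.symm (PowerSeries.C r), F.injective ?_⟩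
  simp only [map_add, map_mul, AlgEquiv.apply_symm_apply, finTwoEquiv_X_zero, finTwoEquiv_X_one,
    F]
  rw [← hq, hr, map_mul]
  ring

theorem ker_toDualNumber_zero :
    RingHom.ker (toDualNumber (R := R) (0 : Fin 2)) = Ideal.span {X 1, X 0 ^ 2} := by
  apply le_antisymm
  · intro f hf
    rw [RingHom.mem_ker] at hf
    obtain ⟨a, b, rfl⟩ :=
      exists_eq_X_zero_mul_add_X_one_mul (by simpa using congrArg TrivSqZeroExt.fst hf)
    have ha : constantCoeff a = 0 := by
      simpa [coeff_single_mul, coeff_X, Finsupp.single_eq_single_iff] using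
        congrArg TrivSqZeroExt.snd hf
    obtain ⟨c, d, rfl⟩ := exists_eq_X_zero_mul_add_X_one_mul ha
    exact Ideal.mem_span_pair.2 ⟨X 0 * d + b, c, by ring⟩
  · rw [Ideal.span_le]
    rintro _ (rfl | rfl) <;> ext <;> simp [coeff_X, pow_two, Finsupp.single_eq_single_iff]

theorem finrank_quotient_span_X_one_X_zero_sq (K : Type*) [Field K] :
    Module.finrank K
      (MvPowerSeries (Fin 2) K ⧸ Ideal.span {(X 1 : MvPowerSeries (Fin 2) K), X 0 ^ 2}) = 2 := by
  rw [← ker_toDualNumber_zero, (Ideal.quotientKerAlgEquivOfSurjective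
    (toDualNumber_surjective (R := K) (0 : Fin 2))).toLinearEquiv.finrank_eq]
  change Module.finrank K (K × K) = 2
  simp

end CommRing

theorem mul_ne_X_zero_sq_add_X_one_pow {K : Type*} [Field K] (hK : ¬IsSquare (-1 : K)) (m : ℕ)
    {u v : MvPowerSeries (Fin 2) K} (hu : constantCoeff u = 0) (hv : constantCoeff v = 0) :
    u * v ≠ X 0 ^ 2 + X 1 ^ m := by
  intro h
  refine PowerSeries.mul_ne_X_sq_add_C_X_pow hK m (u := finTwoEquiv K u) (v := finTwoEquiv K v)
    (by simpa) (by simpa) ?_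
  simpa using congrArg (finTwoEquiv K) h

theorem finrank_quotient_span_map_of_X_one_dvd {m : ℕ} (hm : m ≠ 0)
    {l n : MvPowerSeries (Fin 2) ℝ} (hn : constantCoeff n = 0)
    (hln : l * n = X 1 * (X 0 ^ 2 + X 1 ^ m)) (hl : X 1 ∣ l) :
    Module.finrank ℂ (MvPowerSeries (Fin 2) ℂ ⧸
      Ideal.span {map (algebraMap ℝ ℂ) l, map (algebraMap ℝ ℂ) n}) = 2 := by
  obtain ⟨w, rfl⟩ := hl
  have hwn : w * n = X 0 ^ 2 + X 1 ^ m :=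
    mul_left_cancel₀ (prime_X 1).ne_zero (by rw [← mul_assoc, hln])
  have hw : IsUnit w := isUnit_iff_constantCoeff.2 <| isUnit_iff_ne_zero.2 fun hw =>
    mul_ne_X_zero_sq_add_X_one_pow (by simp) m hw hn hwn
  rw [map_mul, map_X, Ideal.span_mul_unit_pair_eq_of_mul_eq_sq_add_pow (x := X 0) hm (hw.map _)
    (by rw [← map_mul, hwn]; simp), finrank_quotient_span_X_one_X_zero_sq]

end MvPowerSeries

/-- Theorem 3.14(2), case `D⁺_{2k}`: if `l·n = Y·(X² + Y^{2k−2})` in `ℝ⟦X,Y⟧`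
with `l, n` vanishing at the origin, then the complexifications `l̂, n̂` satisfy
`dim_ℂ ℂ⟦X,Y⟧/⟨l̂,n̂⟩ = 2`. -/
theorem stmt6 (k : ℕ) (hk : 2 ≤ k)
    (l n : MvPowerSeries (Fin 2) ℝ)
    (hl : constantCoeff l = 0)
    (hn : constantCoeff n = 0)
    (hln : l * n = X 1 * ((X 0) ^ 2 + (X 1) ^ (2 * k - 2))) :
    Module.finrank ℂ (MvPowerSeries (Fin 2) ℂ ⧸
      Ideal.span {MvPowerSeries.map (algebraMap ℝ ℂ) l,
                  MvPowerSeries.map (algebraMap ℝ ℂ) n}) = 2 := by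
  have hm : 2 * k - 2 ≠ 0 := by omega
  rcases (prime_X 1).dvd_or_dvd ⟨_, hln⟩ with hXl | hXn
  · exact finrank_quotient_span_map_of_X_one_dvd hm hn hln hXl
  · rw [Set.pair_comm]
    exact finrank_quotient_span_map_of_X_one_dvd hm hl (by rw [mul_comm, hln]) hXn
end

section
/- Let R = ℂ⟦X,Y⟧ be the formal power series ring in two variables over ℂ. For every integer k ≥ 1, there do not exist l, n ∈ R, both with zero constant coefficient, such that l·n = X² + Y^{2k+1}. Likewise, there do not exist such l, n with l·n = X³ + Y⁴, nor with l·n = X³ + Y⁵. -/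
/-!
Give `X 0` weight `q` and `X 1` weight `p`, so that `X 0 ^ p + X 1 ^ q` is weighted homogeneous
of weight `p * q`. Weighted orders add under multiplication, so a factorization `f * g` into
series vanishing at the origin splits `p * q = a + b` with `a, b ≥ 1`. Since the monomial
`X 0 ^ p` has weight `a + b`, it can only arise as a product of a monomial of `f` of weight `a`
and one of `g` of weight `b`; the former divides `X 0 ^ p`, so it is a power of `X 0` and
`q ∣ a`. Likewise `X 1 ^ q` gives `p ∣ a`. For coprime `p, q` this gives `p * q ∣ a < p * q`.
-/

open MvPowerSeries Finsupp

namespace MvPowerSeries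

variable {σ R : Type*} [Semiring R]

section Weighted

variable (w : σ → ℕ)

theorem exists_le_coeff_ne_zero_of_coeff_mul_ne_zero {f g : MvPowerSeries σ R} {d : σ →₀ ℕ}
    (h : coeff d (f * g) ≠ 0) : ∃ x ≤ d, coeff x f ≠ 0 ∧ coeff (d - x) g ≠ 0 := by
  classical
  rw [coeff_mul] at h
  obtain ⟨⟨x, y⟩, hxy, hne⟩ := Finset.exists_ne_zero_of_sum_ne_zero h
  rw [Finset.HasAntidiagonal.mem_antidiagonal] at hxy
  subst hxy
  exact ⟨x, le_self_add, left_ne_zero_of_mul hne, by simpa using right_ne_zero_of_mul hne⟩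

theorem exists_le_weight_eq_weightedOrder_of_coeff_mul_ne_zero {f g : MvPowerSeries σ R}
    {d : σ →₀ ℕ} (h : coeff d (f * g) ≠ 0)
    (hd : (weight w d : ℕ∞) = f.weightedOrder w + g.weightedOrder w) :
    ∃ x ≤ d, coeff x f ≠ 0 ∧ (weight w x : ℕ∞) = f.weightedOrder w := by
  obtain ⟨x, hxd, hfx, hgx⟩ := exists_le_coeff_ne_zero_of_coeff_mul_ne_zero h
  have hf := weightedOrder_le w hfx
  have hg := weightedOrder_le w hgx
  have hsum : weight w x + weight w (d - x) = weight w d := by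
    rw [← map_add, add_tsub_cancel_of_le hxd]
  obtain ⟨a, ha⟩ := ENat.ne_top_iff_exists.mp (ne_top_of_le_ne_top (ENat.natCast_ne_top _) hf)
  obtain ⟨b, hb⟩ := ENat.ne_top_iff_exists.mp (ne_top_of_le_ne_top (ENat.natCast_ne_top _) hg)
  refine ⟨x, hxd, hfx, ?_⟩
  rw [← ha] at hd hf ⊢
  rw [← hb] at hd hg
  norm_cast at hd hf hg ⊢
  omega

theorem dvd_of_coeff_single_mul_ne_zero {f g : MvPowerSeries σ R} {a b : ℕ}
    (hf : f.weightedOrder w = a) (hg : g.weightedOrder w = b) {i : σ} {m : ℕ}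
    (h : coeff (single i m) (f * g) ≠ 0) (hm : m * w i = a + b) : w i ∣ a := by
  obtain ⟨x, hx, -, hxw⟩ := exists_le_weight_eq_weightedOrder_of_coeff_mul_ne_zero w h
    (by rw [hf, hg, weight_single]; exact_mod_cast hm)
  have hxi : x = single i (x i) :=
    support_subset_singleton.mp ((support_mono hx).trans support_single_subset)
  rw [hxi, weight_single, hf, smul_eq_mul, Nat.cast_inj] at hxw
  exact ⟨x i, by rw [← hxw, mul_comm]⟩

theorem one_le_weightedOrder_of_constantCoeff_eq_zero (hw : ∀ i, w i ≠ 0)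
    {f : MvPowerSeries σ R} (hf : constantCoeff f = 0) : 1 ≤ f.weightedOrder w := by
  have := nonTorsionWeight_of ℕ (w := w) hw
  refine nat_le_weightedOrder w fun d hd => ?_
  rw [Nat.lt_one_iff, weight_eq_zero_iff_eq_zero] at hd
  rwa [hd, coeff_zero_eq_constantCoeff_apply]

theorem coeff_X_pow_add_X_pow_left [DecidableEq σ] {i j : σ} (hij : i ≠ j) {p : ℕ} (hp : p ≠ 0)
    (q : ℕ) :
    coeff (single i p) (X i ^ p + X j ^ q : MvPowerSeries σ R) = 1 := by
  have : single i p ≠ single j q := fun h => hp (by simpa [hij] using DFunLike.congr_fun h i)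
  rw [map_add, coeff_X_pow, coeff_X_pow, if_pos rfl, if_neg this, add_zero]

theorem weightedOrder_X_pow_add_X_pow [Nontrivial R] {i j : σ} (hij : i ≠ j) {p q n : ℕ}
    (hp : p ≠ 0) (hpn : p * w i = n) (hqn : q * w j = n) :
    (X i ^ p + X j ^ q : MvPowerSeries σ R).weightedOrder w = n := by
  classical
  refine le_antisymm ?_ ?_
  · rw [← hpn, ← smul_eq_mul, ← weight_single]
    exact weightedOrder_le w (by rw [coeff_X_pow_add_X_pow_left hij hp]; exact one_ne_zero)
  · refine le_trans ?_ (min_weightedOrder_le_add w)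
    rw [X_pow_eq, X_pow_eq, weightedOrder_monomial_of_ne_zero w one_ne_zero,
      weightedOrder_monomial_of_ne_zero w one_ne_zero, weight_single, weight_single]
    simp [hpn, hqn]

end Weighted

theorem mul_ne_X_pow_add_X_pow_of_constantCoeff_eq_zero [NoZeroDivisors R] [Nontrivial R]
    {p q : ℕ} (hp : p ≠ 0) (hq : q ≠ 0) (hpq : p.Coprime q) {f g : MvPowerSeries (Fin 2) R}
    (hf : constantCoeff f = 0) (hg : constantCoeff g = 0) : f * g ≠ X 0 ^ p + X 1 ^ q := by
  intro h
  set w : Fin 2 → ℕ := ![q, p]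
  have hw : ∀ i, w i ≠ 0 := by simp [w, Fin.forall_fin_two, hp, hq]
  have hord : f.weightedOrder w + g.weightedOrder w = (p * q : ℕ) := by
    rw [← weightedOrder_mul, h]
    exact weightedOrder_X_pow_add_X_pow w (by decide) hp rfl (mul_comm q p)
  have hf1 := one_le_weightedOrder_of_constantCoeff_eq_zero w hw hf
  have hg1 := one_le_weightedOrder_of_constantCoeff_eq_zero w hw hg
  obtain ⟨hf_top, hg_top⟩ := WithTop.add_ne_top.mp (hord ▸ ENat.natCast_ne_top (p * q))
  lift f.weightedOrder w to ℕ using hf_top with a ha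
  lift g.weightedOrder w to ℕ using hg_top with b hb
  norm_cast at hord hf1 hg1
  have hqa : q ∣ a := dvd_of_coeff_single_mul_ne_zero w (i := 0) ha.symm hb.symm
    (by rw [h, coeff_X_pow_add_X_pow_left (by decide) hp]; exact one_ne_zero) hord.symm
  have hpa : p ∣ a := dvd_of_coeff_single_mul_ne_zero w (i := 1) ha.symm hb.symm
    (by rw [h, add_comm, coeff_X_pow_add_X_pow_left (by decide) hq]; exact one_ne_zero)
    (hord.trans (mul_comm p q)).symm
  have hpq_le : p * q ≤ a := Nat.le_of_dvd hf1 (hpq.mul_dvd_of_dvd_of_dvd hpa hqa)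
  omega

end MvPowerSeries

/-- Key claim in the proof of Theorem 3.13(2): the normal forms of the simple
singularities `A_{2k}`, `E₆` and `E₈` are irreducible in `ℂ⟦X,Y⟧`, i.e. are not
products of two series vanishing at the origin. -/
theorem stmt10 :
    (∀ k : ℕ, 1 ≤ k →
      ¬ ∃ l n : MvPowerSeries (Fin 2) ℂ,
          constantCoeff l = 0 ∧ constantCoeff n = 0 ∧
          l * n = (X 0) ^ 2 + (X 1) ^ (2 * k + 1)) ∧
    (¬ ∃ l n : MvPowerSeries (Fin 2) ℂ,
        constantCoeff l = 0 ∧ constantCoeff n = 0 ∧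
        l * n = (X 0) ^ 3 + (X 1) ^ 4) ∧
    (¬ ∃ l n : MvPowerSeries (Fin 2) ℂ,
        constantCoeff l = 0 ∧ constantCoeff n = 0 ∧
        l * n = (X 0) ^ 3 + (X 1) ^ 5) := by
  have key (p q : ℕ) (hp : p ≠ 0) (hq : q ≠ 0) (hpq : p.Coprime q) :
      ¬ ∃ l n : MvPowerSeries (Fin 2) ℂ,
        constantCoeff l = 0 ∧ constantCoeff n = 0 ∧ l * n = X 0 ^ p + X 1 ^ q :=
    fun ⟨_, _, hl, hn, h⟩ => mul_ne_X_pow_add_X_pow_of_constantCoeff_eq_zero hp hq hpq hl hn h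
  exact ⟨fun k _ => key 2 (2 * k + 1) two_ne_zero (by omega)
      (Nat.coprime_two_left.mpr (odd_two_mul_add_one k)),
    key 3 4 three_ne_zero four_ne_zero (by norm_num),
    key 3 5 three_ne_zero (by norm_num) (by norm_num)⟩
end

section
/- Let s, t ∈ ℝ with s ≠ 3, and define the real polynomials φ(p) = (3−s)·p³ − t·p² − (9+s)·p − t and α(p) = (3−s)·p² − (3+s). Then there exists p ∈ ℝ with φ(p) = 0 and α(p) = 0 if and only if s² + t² = 9. -/
/-!
Subtracting `p·α(p)` from `φ(p)` leaves `-(t p² + 6p + t)`, and eliminating `p²` between this and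
`α` shows that a common root must satisfy the linear equation `(3 - s) p + t = 0`. On that line
`φ(p) = 2p·α(p)` and `(3 - s)·α(p) = s² + t² - 9`, so the common roots are exactly the point
`p = t / (s - 3)` of the line, and only when `s² + t² = 9`.
-/

/-- The cubic `φ` of the exceptional fibre. -/
def umbilicCubic (s t p : ℝ) : ℝ := (3 - s) * p ^ 3 - t * p ^ 2 - (9 + s) * p - t

/-- The quadratic `α` deciding the saddle/node type. -/
def umbilicQuadratic (s p : ℝ) : ℝ := (3 - s) * p ^ 2 - (3 + s)

section

variable {s t p : ℝ}

theorem linear_of_umbilicCubic_eq_zero_of_umbilicQuadratic_eq_zero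
    (hφ : umbilicCubic s t p = 0) (hα : umbilicQuadratic s p = 0) : (3 - s) * p + t = 0 := by
  unfold umbilicCubic umbilicQuadratic at *
  have hreduced : t * p ^ 2 + 6 * p + t = 0 := by linear_combination -hφ + p * hα
  linear_combination ((3 - s) * hreduced - t * hα) / 6

theorem umbilicCubic_eq_of_linear (hline : (3 - s) * p + t = 0) :
    umbilicCubic s t p = 2 * p * umbilicQuadratic s p := by
  unfold umbilicCubic umbilicQuadratic
  linear_combination (-p ^ 2 - 1) * hline

theorem mul_umbilicQuadratic_eq_of_linear (hline : (3 - s) * p + t = 0) :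
    (3 - s) * umbilicQuadratic s p = s ^ 2 + t ^ 2 - 9 := by
  unfold umbilicQuadratic
  linear_combination ((3 - s) * p - t) * hline

end

/-- Proposition 5.1, third bullet: for `s ≠ 3`, the cubic
`φ(p) = (3−s)p³ − tp² − (9+s)p − t` and the quadratic `α(p) = (3−s)p² − (3+s)`
have a common real root if and only if `s² + t² = 9`. -/
theorem stmt13 (s t : ℝ) (hs : s ≠ 3) :
    (∃ p : ℝ, (3 - s) * p ^ 3 - t * p ^ 2 - (9 + s) * p - t = 0 ∧
              (3 - s) * p ^ 2 - (3 + s) = 0) ↔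
    s ^ 2 + t ^ 2 = 9 := by
  change (∃ p, umbilicCubic s t p = 0 ∧ umbilicQuadratic s p = 0) ↔ _
  constructor
  · rintro ⟨p, hφ, hα⟩
    have hline := linear_of_umbilicCubic_eq_zero_of_umbilicQuadratic_eq_zero hφ hα
    have hcircle := mul_umbilicQuadratic_eq_of_linear hline
    rw [hα, mul_zero] at hcircle
    linarith
  · intro hcircle
    have hline : (3 - s) * (t / (s - 3)) + t = 0 := by
      field_simp [sub_ne_zero.mpr hs]
      ring
    have hα : umbilicQuadratic s (t / (s - 3)) = 0 := by
      have h := mul_umbilicQuadratic_eq_of_linear hline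
      rw [hcircle, sub_self] at h
      exact (mul_eq_zero.mp h).resolve_left (sub_ne_zero.mpr hs.symm)
    exact ⟨t / (s - 3), by rw [umbilicCubic_eq_of_linear hline, hα, mul_zero], hα⟩
end

section
/- Let s, t, p ∈ ℝ and suppose that t·p³ + 2s·p² + (2t+3)·p + s = 0 and 2t·p² + 3s·p + t + 3 = 0. Then (s + t + 1)·(s − t − 1) = 0 or s² − t² − 3t = 0. -/
/-- Proposition 5.3, case (i): if the cubic `φ(p) = tp³ + 2sp² + (2t+3)p + s`
and the quadratic `α(p) = 2tp² + 3sp + t + 3` have a common real root, then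
`(s+t+1)(s−t−1) = 0` or `s² − t² − 3t = 0`. -/
theorem stmt14 (s t p : ℝ)
    (hφ : t * p ^ 3 + 2 * s * p ^ 2 + (2 * t + 3) * p + s = 0)
    (hα : 2 * t * p ^ 2 + 3 * s * p + t + 3 = 0) :
    (s + t + 1) * (s - t - 1) = 0 ∨ s ^ 2 - t ^ 2 - 3 * t = 0 := by
  have key : ((s + t + 1) * (s - t - 1)) * (s ^ 2 - t ^ 2 - 3 * t) = 0 := by
    linear_combination ((-8/3 : ℝ)*s*t - (4/3)*s*t^2 + s^3 + (-(4/3)*t^2 - (4/3)*t^3 + (2/3)*s^2*t)*p) * hφ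
      + (t + 2*t^2 + t^3 - (1/3)*s^2 - (2/3)*s^2*t + ((5/3)*s*t + s*t^2 - (2/3)*s^3)*p + ((2/3)*t^2 + (2/3)*t^3 - (1/3)*s^2*t)*p^2) * hα
  rcases mul_eq_zero.mp key with h | h
  · exact Or.inl h
  · exact Or.inr h
end

section
/- Let ε ∈ {1, −1} and a₂₂, a₃₀, a₃₁, a₃₂, a₃₃ ∈ ℝ. Let P(x,y) = ε·x + a₂₂·y² + a₃₀·x³ + a₃₁·x²y + a₃₂·xy² + a₃₃·y³ and let f = P + R, where R : ℝ² → ℝ is smooth and all its iterated derivatives of order ≤ 3 vanish at the origin (i.e. R vanishes to order 4 at (0,0)). Define δ(x,y) = f_x(x,y)² + f_y(x,y)² − 1. Then δ(0,0) = 0, both partial derivatives of δ vanish at (0,0), and the Hessian of δ at (0,0) is nondegenerate (i.e. δ_{xx}(0,0)·δ_{yy}(0,0) − δ_{xy}(0,0)² ≠ 0) if and only if 6·a₂₂²·a₃₀ + ε·(3·a₃₀·a₃₂ − a₃₁²) ≠ 0. -/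
noncomputable def Dx (g : ℝ × ℝ → ℝ) : ℝ × ℝ → ℝ := fun p => fderiv ℝ g p (1, 0)
noncomputable def Dy (g : ℝ × ℝ → ℝ) : ℝ × ℝ → ℝ := fun p => fderiv ℝ g p (0, 1)

noncomputable def Q (q0 q1 q2 q3 q4 q5 : ℝ) (S : ℝ × ℝ → ℝ) : ℝ × ℝ → ℝ :=
  fun p => q0 + q1 * p.1 + q2 * p.2 + q3 * p.1 ^ 2 + q4 * (p.1 * p.2) + q5 * p.2 ^ 2 + S p

lemma Dx_contDiff {g : ℝ × ℝ → ℝ} (hg : ContDiff ℝ (⊤ : ℕ∞) g) : ContDiff ℝ (⊤ : ℕ∞) (Dx g) :=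
  (hg.fderiv_right (by simp)).clm_apply contDiff_const

lemma Dy_contDiff {g : ℝ × ℝ → ℝ} (hg : ContDiff ℝ (⊤ : ℕ∞) g) : ContDiff ℝ (⊤ : ℕ∞) (Dy g) :=
  (hg.fderiv_right (by simp)).clm_apply contDiff_const


lemma pr_vanish {g : ℝ × ℝ → ℝ} (hg : ContDiff ℝ (⊤ : ℕ∞) g) {n : ℕ}
    (h : ∀ i : ℕ, i ≤ n + 1 → iteratedFDeriv ℝ i g (0, 0) = 0) (w : ℝ × ℝ) :
    ∀ i : ℕ, i ≤ n → iteratedFDeriv ℝ i (fun p => fderiv ℝ g p w) (0, 0) = 0 := by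
  intro i hi
  have hcomp : (fun p => fderiv ℝ g p w)
      = (ContinuousLinearMap.apply ℝ ℝ w) ∘ (fderiv ℝ g) := rfl
  rw [hcomp, ContinuousLinearMap.iteratedFDeriv_comp_left _ (hg.fderiv_right (m := ((⊤ : ℕ∞) : WithTop ℕ∞)) (by simp)).contDiffAt (by exact_mod_cast le_top)]
  ext m
  simp only [ContinuousLinearMap.compContinuousMultilinearMap_coe, Function.comp_apply,
    ContinuousLinearMap.apply_apply, ContinuousMultilinearMap.zero_apply]
  have := iteratedFDeriv_succ_apply_right (𝕜 := ℝ) (n := i) (f := g) (x := ((0:ℝ),(0:ℝ)))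
    (m := Fin.snoc m w)
  rw [h (i+1) (by omega)] at this
  simpa [Fin.init_snoc, Fin.snoc_last] using this.symm

lemma pr_vanishX {g : ℝ × ℝ → ℝ} (hg : ContDiff ℝ (⊤ : ℕ∞) g) {n : ℕ}
    (h : ∀ i : ℕ, i ≤ n + 1 → iteratedFDeriv ℝ i g (0, 0) = 0) :
    ∀ i : ℕ, i ≤ n → iteratedFDeriv ℝ i (Dx g) (0, 0) = 0 := pr_vanish hg h (1, 0)

lemma pr_vanishY {g : ℝ × ℝ → ℝ} (hg : ContDiff ℝ (⊤ : ℕ∞) g) {n : ℕ}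
    (h : ∀ i : ℕ, i ≤ n + 1 → iteratedFDeriv ℝ i g (0, 0) = 0) :
    ∀ i : ℕ, i ≤ n → iteratedFDeriv ℝ i (Dy g) (0, 0) = 0 := pr_vanish hg h (0, 1)

lemma pr_val {g : ℝ × ℝ → ℝ} (h : ∀ i : ℕ, i ≤ 0 → iteratedFDeriv ℝ i g (0, 0) = 0) :
    g (0, 0) = 0 := by
  have := congrFun (congrArg DFunLike.coe (h 0 le_rfl)) 0
  simpa using this

lemma lineX {g : ℝ × ℝ → ℝ} (hg : ContDiff ℝ (⊤ : ℕ∞) g) (a c : ℝ) :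
    HasDerivAt (fun x => g (x, c)) (Dx g (a, c)) a :=
  ((hg.differentiable (by simp) (a, c)).hasFDerivAt.comp_hasDerivAt a
    ((hasDerivAt_id a).prodMk (hasDerivAt_const a c)))

lemma lineY {g : ℝ × ℝ → ℝ} (hg : ContDiff ℝ (⊤ : ℕ∞) g) (a c : ℝ) :
    HasDerivAt (fun y => g (a, y)) (Dy g (a, c)) c :=
  ((hg.differentiable (by simp) (a, c)).hasFDerivAt.comp_hasDerivAt c
    ((hasDerivAt_const c a).prodMk (hasDerivAt_id c)))

lemma Q_derX (q0 q1 q2 q3 q4 q5 : ℝ) {S : ℝ × ℝ → ℝ} (hS : ContDiff ℝ (⊤ : ℕ∞) S) (a c : ℝ) :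
    HasDerivAt (fun x => Q q0 q1 q2 q3 q4 q5 S (x, c))
      (q1 + 2 * q3 * a + q4 * c + Dx S (a, c)) a := by
  exact ((((((hasDerivAt_const a q0).add ((hasDerivAt_id a).const_mul q1)).add
    (hasDerivAt_const a (q2 * c))).add ((hasDerivAt_pow 2 a).const_mul q3)).add
    (((hasDerivAt_id a).mul_const c).const_mul q4)).add
    (hasDerivAt_const a (q5 * c ^ 2))).add (lineX hS a c) |>.congr_deriv (by push_cast; ring)

lemma Q_derY (q0 q1 q2 q3 q4 q5 : ℝ) {S : ℝ × ℝ → ℝ} (hS : ContDiff ℝ (⊤ : ℕ∞) S) (a c : ℝ) :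
    HasDerivAt (fun y => Q q0 q1 q2 q3 q4 q5 S (a, y))
      (q2 + q4 * a + 2 * q5 * c + Dy S (a, c)) c := by
  exact ((((((hasDerivAt_const c q0).add (hasDerivAt_const c (q1 * a))).add
    ((hasDerivAt_id c).const_mul q2)).add (hasDerivAt_const c (q3 * a ^ 2))).add
    (((hasDerivAt_id c).const_mul a).const_mul q4)).add
    ((hasDerivAt_pow 2 c).const_mul q5)).add (lineY hS a c) |>.congr_deriv (by push_cast; ring)

/-- Proposition 5.4(iii): at a lightlike umbilic point, with the surface
parametrised as the graph of
`f(x,y) = ε·x + a₂₂y² + a₃₀x³ + a₃₁x²y + a₃₂xy² + a₃₃y³ + O₄(x,y)` (`ε = ±1`),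
the locus of degeneracy `δ = f_x² + f_y² − 1` vanishes at the origin together
with its first partial derivatives, and it has a nondegenerate (Morse)
singularity there if and only if `6a₂₂²a₃₀ + ε(3a₃₀a₃₂ − a₃₁²) ≠ 0`. -/
theorem stmt16 (ε : ℝ) (hε : ε = 1 ∨ ε = -1)
    (a₂₂ a₃₀ a₃₁ a₃₂ a₃₃ : ℝ)
    (R : ℝ × ℝ → ℝ) (hR : ContDiff ℝ (⊤ : ℕ∞) R)
    (hR4 : ∀ i : ℕ, i ≤ 3 → iteratedFDeriv ℝ i R (0, 0) = 0)
    (f : ℝ × ℝ → ℝ)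
    (hf : f = fun p => ε * p.1 + a₂₂ * p.2 ^ 2 + a₃₀ * p.1 ^ 3
      + a₃₁ * p.1 ^ 2 * p.2 + a₃₂ * p.1 * p.2 ^ 2 + a₃₃ * p.2 ^ 3 + R p)
    (fx fy δ δx δy δxx δxy δyy : ℝ × ℝ → ℝ)
    (hfx : fx = fun p => deriv (fun x => f (x, p.2)) p.1)
    (hfy : fy = fun p => deriv (fun y => f (p.1, y)) p.2)
    (hδ : δ = fun p => fx p ^ 2 + fy p ^ 2 - 1)
    (hδx : δx = fun p => deriv (fun x => δ (x, p.2)) p.1)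
    (hδy : δy = fun p => deriv (fun y => δ (p.1, y)) p.2)
    (hδxx : δxx = fun p => deriv (fun x => δx (x, p.2)) p.1)
    (hδxy : δxy = fun p => deriv (fun y => δx (p.1, y)) p.2)
    (hδyy : δyy = fun p => deriv (fun y => δy (p.1, y)) p.2) :
    δ (0, 0) = 0 ∧ δx (0, 0) = 0 ∧ δy (0, 0) = 0 ∧
      (δxx (0, 0) * δyy (0, 0) - δxy (0, 0) ^ 2 ≠ 0 ↔
        6 * a₂₂ ^ 2 * a₃₀ + ε * (3 * a₃₀ * a₃₂ - a₃₁ ^ 2) ≠ 0) := by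
  have hR1 : ContDiff ℝ (⊤ : ℕ∞) (Dx R) := Dx_contDiff hR
  have hR2 : ContDiff ℝ (⊤ : ℕ∞) (Dy R) := Dy_contDiff hR
  -- fx formula
  have hfx' : fx = Q ε 0 0 (3*a₃₀) (2*a₃₁) a₃₂ (Dx R) := by
    funext p
    obtain ⟨u, v⟩ := p
    rw [hfx, hf]
    show deriv (fun x => ε * x + a₂₂ * v ^ 2 + a₃₀ * x ^ 3 + a₃₁ * x ^ 2 * v
      + a₃₂ * x * v ^ 2 + a₃₃ * v ^ 3 + R (x, v)) u = Q ε 0 0 (3*a₃₀) (2*a₃₁) a₃₂ (Dx R) (u, v)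
    refine HasDerivAt.deriv ?_
    exact (((((((hasDerivAt_id u).const_mul ε).add (hasDerivAt_const u (a₂₂ * v ^ 2))).add
      ((hasDerivAt_pow 3 u).const_mul a₃₀)).add
      (((hasDerivAt_pow 2 u).const_mul a₃₁).mul_const v)).add
      (((hasDerivAt_id u).const_mul a₃₂).mul_const (v ^ 2))).add
      (hasDerivAt_const u (a₃₃ * v ^ 3))).add (lineX hR u v)
      |>.congr_deriv (by simp [Q]; push_cast; ring)
  have hfy' : fy = Q 0 0 (2*a₂₂) a₃₁ (2*a₃₂) (3*a₃₃) (Dy R) := by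
    funext p
    obtain ⟨u, v⟩ := p
    rw [hfy, hf]
    show deriv (fun y => ε * u + a₂₂ * y ^ 2 + a₃₀ * u ^ 3 + a₃₁ * u ^ 2 * y
      + a₃₂ * u * y ^ 2 + a₃₃ * y ^ 3 + R (u, y)) v = Q 0 0 (2*a₂₂) a₃₁ (2*a₃₂) (3*a₃₃) (Dy R) (u, v)
    refine HasDerivAt.deriv ?_
    exact ((((((hasDerivAt_const v (ε * u)).add ((hasDerivAt_pow 2 v).const_mul a₂₂)).add
      (hasDerivAt_const v (a₃₀ * u ^ 3))).add
      ((hasDerivAt_id v).const_mul (a₃₁ * u ^ 2))).add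
      ((hasDerivAt_pow 2 v).const_mul (a₃₂ * u))).add
      ((hasDerivAt_pow 3 v).const_mul a₃₃)).add (lineY hR u v)
      |>.congr_deriv (by simp [Q]; push_cast; ring)
  -- names for the six first-order "shape" functions
  set QFx : ℝ × ℝ → ℝ := Q ε 0 0 (3*a₃₀) (2*a₃₁) a₃₂ (Dx R) with hQFx
  set QFy : ℝ × ℝ → ℝ := Q 0 0 (2*a₂₂) a₃₁ (2*a₃₂) (3*a₃₃) (Dy R) with hQFy
  set QGx : ℝ × ℝ → ℝ := Q 0 (6*a₃₀) (2*a₃₁) 0 0 0 (Dx (Dx R)) with hQGx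
  set QGy : ℝ × ℝ → ℝ := Q 0 (2*a₃₁) (2*a₃₂) 0 0 0 (Dy (Dx R)) with hQGy
  set QHx : ℝ × ℝ → ℝ := Q 0 (2*a₃₁) (2*a₃₂) 0 0 0 (Dx (Dy R)) with hQHx
  set QHy : ℝ × ℝ → ℝ := Q (2*a₂₂) (2*a₃₂) (6*a₃₃) 0 0 0 (Dy (Dy R)) with hQHy
  have dFxX : ∀ a c : ℝ, HasDerivAt (fun x => QFx (x, c)) (QGx (a, c)) a := fun a c =>
    (Q_derX ε 0 0 (3*a₃₀) (2*a₃₁) a₃₂ hR1 a c).congr_deriv (by rw [hQGx]; simp only [Q]; ring)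
  have dFxY : ∀ a c : ℝ, HasDerivAt (fun y => QFx (a, y)) (QGy (a, c)) c := fun a c =>
    (Q_derY ε 0 0 (3*a₃₀) (2*a₃₁) a₃₂ hR1 a c).congr_deriv (by rw [hQGy]; simp only [Q]; ring)
  have dFyX : ∀ a c : ℝ, HasDerivAt (fun x => QFy (x, c)) (QHx (a, c)) a := fun a c =>
    (Q_derX 0 0 (2*a₂₂) a₃₁ (2*a₃₂) (3*a₃₃) hR2 a c).congr_deriv (by rw [hQHx]; simp only [Q]; ring)
  have dFyY : ∀ a c : ℝ, HasDerivAt (fun y => QFy (a, y)) (QHy (a, c)) c := fun a c =>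
    (Q_derY 0 0 (2*a₂₂) a₃₁ (2*a₃₂) (3*a₃₃) hR2 a c).congr_deriv (by rw [hQHy]; simp only [Q]; ring)
  have hδ' : δ = fun p => QFx p ^ 2 + QFy p ^ 2 - 1 := by rw [hδ, hfx', hfy']
  have hδx' : δx = fun p => 2 * QFx p * QGx p + 2 * QFy p * QHx p := by
    funext p
    obtain ⟨u, v⟩ := p
    rw [hδx, hδ']
    show deriv (fun x => QFx (x, v) ^ 2 + QFy (x, v) ^ 2 - 1) u = _
    refine HasDerivAt.deriv ?_
    exact (((dFxX u v).pow 2).add ((dFyX u v).pow 2)).sub_const 1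
      |>.congr_deriv (by push_cast; ring)
  have hδy' : δy = fun p => 2 * QFx p * QGy p + 2 * QFy p * QHy p := by
    funext p
    obtain ⟨u, v⟩ := p
    rw [hδy, hδ']
    show deriv (fun y => QFx (u, y) ^ 2 + QFy (u, y) ^ 2 - 1) v = _
    refine HasDerivAt.deriv ?_
    exact (((dFxY u v).pow 2).add ((dFyY u v).pow 2)).sub_const 1
      |>.congr_deriv (by push_cast; ring)
  -- vanishing of partial derivatives of R at the origin
  have V1 := pr_vanishX hR (n := 2) (fun i hi => hR4 i (by omega))
  have V2 := pr_vanishY hR (n := 2) (fun i hi => hR4 i (by omega))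
  have V11 := pr_vanishX hR1 (n := 1) V1
  have V12 := pr_vanishY hR1 (n := 1) V1
  have V21 := pr_vanishX hR2 (n := 1) V2
  have V22 := pr_vanishY hR2 (n := 1) V2
  have v1 : Dx R (0, 0) = 0 := pr_val (fun i hi => V1 i (by omega))
  have v2 : Dy R (0, 0) = 0 := pr_val (fun i hi => V2 i (by omega))
  have v11 : Dx (Dx R) (0, 0) = 0 := pr_val (fun i hi => V11 i (by omega))
  have v12 : Dy (Dx R) (0, 0) = 0 := pr_val (fun i hi => V12 i (by omega))
  have v21 : Dx (Dy R) (0, 0) = 0 := pr_val (fun i hi => V21 i (by omega))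
  have v22 : Dy (Dy R) (0, 0) = 0 := pr_val (fun i hi => V22 i (by omega))
  have v111 : Dx (Dx (Dx R)) (0, 0) = 0 := pr_val (pr_vanishX (Dx_contDiff hR1) (n := 0) V11)
  have v112 : Dy (Dx (Dx R)) (0, 0) = 0 := pr_val (pr_vanishY (Dx_contDiff hR1) (n := 0) V11)
  have v211 : Dx (Dx (Dy R)) (0, 0) = 0 := pr_val (pr_vanishX (Dx_contDiff hR2) (n := 0) V21)
  have v212 : Dy (Dx (Dy R)) (0, 0) = 0 := pr_val (pr_vanishY (Dx_contDiff hR2) (n := 0) V21)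
  have v122 : Dy (Dy (Dx R)) (0, 0) = 0 := pr_val (pr_vanishY (Dy_contDiff hR1) (n := 0) V12)
  have v222 : Dy (Dy (Dy R)) (0, 0) = 0 := pr_val (pr_vanishY (Dy_contDiff hR2) (n := 0) V22)
  -- values of the shape functions at the origin
  have eFx : QFx (0, 0) = ε := by rw [hQFx]; simp [Q, -Prod.mk_zero_zero, v1]
  have eFy : QFy (0, 0) = 0 := by rw [hQFy]; simp [Q, -Prod.mk_zero_zero, v2]
  have eGx : QGx (0, 0) = 0 := by rw [hQGx]; simp [Q, -Prod.mk_zero_zero, v11]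
  have eGy : QGy (0, 0) = 0 := by rw [hQGy]; simp [Q, -Prod.mk_zero_zero, v12]
  have eHx : QHx (0, 0) = 0 := by rw [hQHx]; simp [Q, -Prod.mk_zero_zero, v21]
  have eHy : QHy (0, 0) = 2 * a₂₂ := by rw [hQHy]; simp [Q, -Prod.mk_zero_zero, v22]
  -- derivatives of the second-order shape functions at the origin
  have dGxX : HasDerivAt (fun x => QGx (x, 0)) (6 * a₃₀) 0 :=
    (Q_derX 0 (6*a₃₀) (2*a₃₁) 0 0 0 (Dx_contDiff hR1) 0 0).congr_deriv (by rw [v111]; ring)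
  have dGxY : HasDerivAt (fun y => QGx (0, y)) (2 * a₃₁) 0 :=
    (Q_derY 0 (6*a₃₀) (2*a₃₁) 0 0 0 (Dx_contDiff hR1) 0 0).congr_deriv (by rw [v112]; ring)
  have dHxX : HasDerivAt (fun x => QHx (x, 0)) (2 * a₃₁) 0 :=
    (Q_derX 0 (2*a₃₁) (2*a₃₂) 0 0 0 (Dx_contDiff hR2) 0 0).congr_deriv (by rw [v211]; ring)
  have dHxY : HasDerivAt (fun y => QHx (0, y)) (2 * a₃₂) 0 :=
    (Q_derY 0 (2*a₃₁) (2*a₃₂) 0 0 0 (Dx_contDiff hR2) 0 0).congr_deriv (by rw [v212]; ring)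
  have dGyY : HasDerivAt (fun y => QGy (0, y)) (2 * a₃₂) 0 :=
    (Q_derY 0 (2*a₃₁) (2*a₃₂) 0 0 0 (Dy_contDiff hR1) 0 0).congr_deriv (by rw [v122]; ring)
  have dHyY : HasDerivAt (fun y => QHy (0, y)) (6 * a₃₃) 0 :=
    (Q_derY (2*a₂₂) (2*a₃₂) (6*a₃₃) 0 0 0 (Dy_contDiff hR2) 0 0).congr_deriv (by rw [v222]; ring)
  have hε2 : ε ^ 2 = 1 := by rcases hε with h | h <;> rw [h] <;> norm_num
  have δ0 : δ (0, 0) = 0 := by rw [hδ']; simp [-Prod.mk_zero_zero, eFx, eFy, hε2]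
  have δx0 : δx (0, 0) = 0 := by rw [hδx']; simp [-Prod.mk_zero_zero, eFx, eFy, eGx, eHx]
  have δy0 : δy (0, 0) = 0 := by rw [hδy']; simp [-Prod.mk_zero_zero, eFx, eFy, eGy, eHy]
  -- second derivatives of δ at the origin
  have hxx : δxx (0, 0) = 12 * ε * a₃₀ := by
    rw [hδxx]
    show deriv (fun x => δx (x, 0)) 0 = _
    rw [hδx']
    refine HasDerivAt.deriv ?_
    exact ((((dFxX 0 0).const_mul 2).mul dGxX).add (((dFyX 0 0).const_mul 2).mul dHxX)).congr_deriv
      (by rw [eFx, eFy, eGx, eHx]; ring)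
  have hxy : δxy (0, 0) = 4 * ε * a₃₁ := by
    rw [hδxy]
    show deriv (fun y => δx (0, y)) 0 = _
    rw [hδx']
    refine HasDerivAt.deriv ?_
    exact ((((dFxY 0 0).const_mul 2).mul dGxY).add (((dFyY 0 0).const_mul 2).mul dHxY)).congr_deriv
      (by rw [eFx, eFy, eGx, eGy, eHx, eHy]; ring)
  have hyy : δyy (0, 0) = 4 * ε * a₃₂ + 8 * a₂₂ ^ 2 := by
    rw [hδyy]
    show deriv (fun y => δy (0, y)) 0 = _
    rw [hδy']
    refine HasDerivAt.deriv ?_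
    exact ((((dFxY 0 0).const_mul 2).mul dGyY).add (((dFyY 0 0).const_mul 2).mul dHyY)).congr_deriv
      (by rw [eFx, eFy, eGy, eHy]; ring)
  refine ⟨δ0, δx0, δy0, ?_⟩
  rw [hxx, hxy, hyy]
  rcases hε with h | h <;> subst h
  · constructor <;> intro h1 h2 <;> apply h1
    · linear_combination 16 * h2
    · linear_combination h2 / 16
  · constructor <;> intro h1 h2 <;> apply h1
    · linear_combination (-16) * h2
    · linear_combination -h2 / 16
end
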